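/- arXiv:2312.10888 — 6 statements merged into one kernel-verified Lean document; each statement's English description precedes it below -/
import Mathlib

section
/- Suppose p* ∈ (0,1] satisfies the fixed-point equation p* = exp(-λcr²η/(1 + Aηp*) - θr^α/ρ) with all parameters positive, and suppose (1 + Aηp*)² - λcr²Aη²p* > 0. Then, regarding p* as an implicitly defined function of A, its derivative satisfies ∂p*/∂A = λcr²η²(p*)²/((1+Aηp*)² - λcr²Aη²p*) > 0; i.e., the steady-state transmission success probability is strictly increasing in the age threshold A. -/
/-- implicit differentiation of the fixed-point equation
p*(A) = exp(-λcr²η/(1+Aηp*) - θr^α/ρ) with respect to the age threshold A: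
the derivative equals λcr²η²p*²/((1+Aηp*)² - λcr²Aη²p*) and is positive. -/
theorem stmt_4 (lam c r η θ α ρ A : ℝ)
    (hlam : 0 < lam) (hc : 0 < c) (hr : 0 < r) (hη : 0 < η) (hθ : 0 < θ)
    (hα : 0 < α) (hρ : 0 < ρ) (hA : 0 < A)
    (P : ℝ → ℝ) (hmem : P A ∈ Set.Ioc (0:ℝ) 1)
    (hfix : ∀ a : ℝ,
      P a = Real.exp (-(lam * c * r ^ 2 * η) / (1 + a * η * P a) - θ * r ^ α / ρ))
    (hstab : 0 < (1 + A * η * P A) ^ 2 - lam * c * r ^ 2 * A * η ^ 2 * P A)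
    (d : ℝ) (hd : HasDerivAt P d A) :
    d = lam * c * r ^ 2 * η ^ 2 * (P A) ^ 2 /
        ((1 + A * η * P A) ^ 2 - lam * c * r ^ 2 * A * η ^ 2 * P A) ∧
      0 < d := by
  obtain ⟨hP0, hP1⟩ := hmem
  set K := lam * c * r ^ 2 * η with hK
  have hKpos : 0 < K := by positivity
  have hu : 0 < 1 + A * η * P A := by positivity
  -- derivative of the denominator
  have h1 : HasDerivAt (fun a => 1 + a * η * P a) (1 * η * P A + A * η * d) A := by
    exact (((hasDerivAt_id A).mul_const η).mul hd).const_add 1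
  -- derivative of the quotient
  have h2 := (hasDerivAt_const A (-K)).div h1 hu.ne'
  have h3 := (h2.sub_const (θ * r ^ α / ρ)).exp
  have hPfun : P = fun a =>
      Real.exp (-K / (1 + a * η * P a) - θ * r ^ α / ρ) := funext hfix
  have h4 : HasDerivAt P
      (Real.exp (-K / (1 + A * η * P A) - θ * r ^ α / ρ) *
        ((0 * (1 + A * η * P A) - -K * (1 * η * P A + A * η * d)) /
          (1 + A * η * P A) ^ 2)) A :=
    h3.congr_of_eventuallyEq (Filter.Eventually.of_forall hfix)
  have hexp : Real.exp (-K / (1 + A * η * P A) - θ * r ^ α / ρ) = P A := (hfix A).symm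
  have hkey : d = P A * ((0 * (1 + A * η * P A) - -K * (1 * η * P A + A * η * d)) /
      (1 + A * η * P A) ^ 2) := by
    have := hd.unique h4
    rwa [hexp] at this
  set D := (1 + A * η * P A) ^ 2 - lam * c * r ^ 2 * A * η ^ 2 * P A with hD
  have hmul : d * D = K * η * (P A) ^ 2 := by
    have h5 : d * (1 + A * η * P A) ^ 2 =
        P A * (0 * (1 + A * η * P A) - -K * (1 * η * P A + A * η * d)) := by
      field_simp at hkey
      linarith [hkey]
    rw [hD, hK] at *
    ring_nf
    ring_nf at h5
    linarith [h5]
  have hdval : d = K * η * (P A) ^ 2 / D := by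
    field_simp
    linarith [hmul]
  constructor
  · rw [hdval, hK]; ring_nf
  · rw [hdval]
    exact div_pos (by positivity) hstab
end

section
/- Suppose p* ∈ (0,1] satisfies p* = exp(-λcr²η/(1 + Aηp*) - θr^α/ρ) and (1 + Aηp*)² - λcr²Aη²p* > 0. Then ∂p*/∂λ = -cr²ηp*(1+Aηp*)/((1+Aηp*)² - λcr²Aη²p*) < 0, i.e., the steady-state transmission success probability is strictly decreasing in the deployment density λ. -/
open Filter Real Topology

/- Differentiating the fixed-point equation `P l = exp (-(l k) / (1 + B P l) - C)` at `lam` gives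
`d = P (-(k Q) + lam k B d) / Q²` with `Q = 1 + B P`, which is linear in `d`; solving it yields the
formula, whose numerator is negative and whose denominator is positive by the stability condition. -/

theorem mul_stability_eq_of_hasDerivAt_of_exp_fixedPoint {P : ℝ → ℝ} {k B C lam d : ℝ}
    (hfix : ∀ᶠ l in 𝓝 lam, P l = exp (-(l * k) / (1 + B * P l) - C))
    (hQ : 1 + B * P lam ≠ 0) (hd : HasDerivAt P d lam) :
    d * ((1 + B * P lam) ^ 2 - lam * k * B * P lam) = -(k * P lam * (1 + B * P lam)) := by
  have hnum : HasDerivAt (fun l : ℝ => -(l * k)) (-k) lam := by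
    simpa using ((hasDerivAt_id lam).mul_const k).fun_neg
  have hden : HasDerivAt (fun l : ℝ => 1 + B * P l) (B * d) lam := by
    simpa using (hd.const_mul B).const_add 1
  have hrhs := ((hnum.fun_div hden hQ).sub_const C).exp
  rw [← hfix.self_of_nhds] at hrhs
  have hd_eq := hd.unique (hrhs.congr_of_eventuallyEq hfix)
  rw [mul_div_assoc', eq_div_iff (pow_ne_zero 2 hQ)] at hd_eq
  linear_combination hd_eq

theorem stmt_5_general (lam c r η θ α ρ A : ℝ)
    (hc : 0 < c) (hr : 0 < r) (hη : 0 < η)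
    (hA : 0 ≤ A)
    (P : ℝ → ℝ)
    (hfix : ∀ l : ℝ,
      P l = Real.exp (-(l * c * r ^ 2 * η) / (1 + A * η * P l) - θ * r ^ α / ρ))
    (hstab : 0 < (1 + A * η * P lam) ^ 2 - lam * c * r ^ 2 * A * η ^ 2 * P lam)
    (d : ℝ) (hd : HasDerivAt P d lam) :
    d = -(c * r ^ 2 * η * P lam * (1 + A * η * P lam)) /
        ((1 + A * η * P lam) ^ 2 - lam * c * r ^ 2 * A * η ^ 2 * P lam) ∧
      d < 0 := by
  have hP : 0 < P lam := (hfix lam).symm ▸ exp_pos _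
  have hQ : 0 < 1 + A * η * P lam := by positivity
  have hfix' : ∀ᶠ l in 𝓝 lam,
      P l = exp (-(l * (c * r ^ 2 * η)) / (1 + A * η * P l) - θ * r ^ α / ρ) :=
    Eventually.of_forall fun l => by simpa only [mul_assoc] using hfix l
  have key := mul_stability_eq_of_hasDerivAt_of_exp_fixedPoint hfix' hQ.ne' hd
  have hd_eq : d = -(c * r ^ 2 * η * P lam * (1 + A * η * P lam)) /
      ((1 + A * η * P lam) ^ 2 - lam * c * r ^ 2 * A * η ^ 2 * P lam) := by
    rw [eq_div_iff hstab.ne']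
    linear_combination key
  refine ⟨hd_eq, hd_eq ▸ div_neg_of_neg_of_pos (neg_neg_of_pos ?_) hstab⟩
  positivity

/-- implicit differentiation of the fixed-point equation
p*(λ) = exp(-λcr²η/(1+Aηp*) - θr^α/ρ) with respect to the density λ:
the derivative equals -cr²ηp*(1+Aηp*)/((1+Aηp*)² - λcr²Aη²p*) and is negative. -/
theorem stmt_5 (lam c r η θ α ρ A : ℝ)
    (hlam : 0 < lam) (hc : 0 < c) (hr : 0 < r) (hη : 0 < η) (hθ : 0 < θ)
    (hα : 0 < α) (hρ : 0 < ρ) (hA : 0 ≤ A)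
    (P : ℝ → ℝ) (hmem : P lam ∈ Set.Ioc (0:ℝ) 1)
    (hfix : ∀ l : ℝ,
      P l = Real.exp (-(l * c * r ^ 2 * η) / (1 + A * η * P l) - θ * r ^ α / ρ))
    (hstab : 0 < (1 + A * η * P lam) ^ 2 - lam * c * r ^ 2 * A * η ^ 2 * P lam)
    (d : ℝ) (hd : HasDerivAt P d lam) :
    d = -(c * r ^ 2 * η * P lam * (1 + A * η * P lam)) /
        ((1 + A * η * P lam) ^ 2 - lam * c * r ^ 2 * A * η ^ 2 * P lam) ∧
      d < 0 :=
  stmt_5_general lam c r η θ α ρ A hc hr hη hA P hfix hstab d hd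
end

section
/- Let p_TSA ∈ (0,1] satisfy p_TSA = exp(-λcr²η/(1+Aηp_TSA) - θr^α/ρ) with A > 0, and let Δ̂_SA = exp(λcr²η + θr^α/ρ)/η and Δ̂_TSA = A + 1/(ηp_TSA). If λcr² ≥ (1 + Aηp_TSA)/η, then Δ̂_SA ≥ Δ̂_TSA. -/
/-- if p_TSA ∈ (0,1] satisfies the TSA fixed-point equation with
A > 0 and λcr² ≥ (1+Aηp_TSA)/η, then the slotted-ALOHA mean peak AoI
exp(λcr²η + θr^α/ρ)/η dominates the TSA mean peak AoI A + 1/(ηp_TSA). -/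
theorem stmt_12 (lam c r η θ α ρ A p : ℝ)
    (hlam : 0 < lam) (hc : 0 < c) (hr : 0 < r) (hη : 0 < η) (hθ : 0 < θ)
    (hα : 0 < α) (hρ : 0 < ρ) (hA : 0 < A)
    (hp : p ∈ Set.Ioc (0:ℝ) 1)
    (hfix : p = Real.exp (-(lam * c * r ^ 2 * η) / (1 + A * η * p) - θ * r ^ α / ρ))
    (hcond : lam * c * r ^ 2 ≥ (1 + A * η * p) / η) :
    A + 1 / (η * p) ≤ Real.exp (lam * c * r ^ 2 * η + θ * r ^ α / ρ) / η := by
  obtain ⟨hp0, hp1⟩ := hp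
  set L : ℝ := lam * c * r ^ 2 * η with hLdef
  set T : ℝ := θ * r ^ α / ρ with hTdef
  set S : ℝ := A * η * p with hSdef
  have hS0 : 0 < S := by positivity
  have h1S : (0:ℝ) < 1 + S := by linarith
  have hinv : p⁻¹ = Real.exp (L / (1 + S) + T) := by
    rw [hfix, ← Real.exp_neg]
    congr 1
    ring
  set a : ℝ := L + T with hadef
  set b : ℝ := L / (1 + S) + T with hbdef
  have key : Real.exp b * (a - b) + Real.exp b ≤ Real.exp a := by
    calc Real.exp b * (a - b) + Real.exp b = Real.exp b * ((a - b) + 1) := by ring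
      _ ≤ Real.exp b * Real.exp (a - b) :=
          mul_le_mul_of_nonneg_left (Real.add_one_le_exp _) (Real.exp_pos b).le
      _ = Real.exp a := by rw [← Real.exp_add]; ring_nf
  have hLge : 1 + S ≤ L := by
    have h := hcond
    rw [ge_iff_le, div_le_iff₀ hη] at h
    linarith
  have hab : S ≤ a - b := by
    have h1 : a - b = L - L / (1 + S) := by rw [hadef, hbdef]; ring
    have h2 : L / (1 + S) ≤ L - S := by
      rw [div_le_iff₀ h1S]; nlinarith
    rw [h1]
    linarith
  have hebpos := Real.exp_pos b
  have hkey2 : η * A + Real.exp b ≤ Real.exp a := by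
    have h2 : η * A ≤ Real.exp b * (a - b) := by
      have : Real.exp b * S ≤ Real.exp b * (a - b) :=
        mul_le_mul_of_nonneg_left hab hebpos.le
      have h3 : Real.exp b * S = η * A := by
        rw [hinv.symm, hSdef]
        field_simp
      linarith
    linarith
  rw [le_div_iff₀ hη]
  have hone : 1 / (η * p) * η = Real.exp b := by
    rw [hinv.symm]
    field_simp
  nlinarith [hkey2, hone]
end

section
/- If λcr² ≤ 1/η then ∂Δ̂/∂A|_{A=0} = 1 - λcr²η ≥ 0, and since lim_{A→∞} ∂Δ̂/∂A = 1 > 0 and the derivative formula is ∂Δ̂/∂A = 1 - λcr²η/((1+Aηp)² - λcr²Aη²p), the mean peak AoI Δ̂(A) = A + 1/(ηp(A)) is nondecreasing in A on [0,∞); hence the optimal age threshold is A* = 0 and the optimal mean peak AoI equals exp(λcr²η + θr^α/ρ)/η. -/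
/-!
Write `L = λcr²η`, `K = θr^α/ρ` and `D = a + 1/(η p(a))` for the mean peak AoI at threshold `a`.
Taking logarithms, the fixed-point equation for `p(a)` becomes
`log (D - a) + L a / D = L + K - log η`, with a right-hand side independent of `a`.
By `log x ≤ x - 1`, the left-hand side is strictly increasing in `D > a` and, when `L ≤ 1`,
nonincreasing in `a ≥ 0`. So if `a ≤ b` but `D(b) < D(a)`, then evaluating at `(b, D(b))`,
`(b, D(a))` and `(a, D(a))` gives a strictly increasing chain between two equal values.
-/

open Real Set

noncomputable def aoiPotential (L a D : ℝ) : ℝ := log (D - a) + L * a / D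

section
variable {L a b D E : ℝ}

theorem aoiPotential_le_of_le (hL : L ≤ 1) (ha : 0 ≤ a) (hab : a ≤ b) (hbD : b < D) :
    aoiPotential L b D ≤ aoiPotential L a D := by
  have hDa : 0 < D - a := by linarith
  have hDb : 0 < D - b := by linarith
  have hlog : log (D - b) - log (D - a) ≤ -((b - a) / (D - a)) := by
    rw [← log_div hDb.ne' hDa.ne']
    calc log ((D - b) / (D - a)) ≤ (D - b) / (D - a) - 1 := log_le_sub_one_of_pos (by positivity)
      _ = -((b - a) / (D - a)) := by field_simp; ring
  have hweight : L * (b - a) / D ≤ (b - a) / (D - a) := by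
    rw [div_le_div_iff₀ (by linarith) hDa]
    nlinarith [mul_nonneg (sub_nonneg.2 hab) ha, mul_nonneg (sub_nonneg.2 hab) hDa.le]
  have hsplit : L * b / D - L * a / D = L * (b - a) / D := by ring
  unfold aoiPotential
  linarith

theorem aoiPotential_lt_of_lt (hL : L ≤ 1) (ha : 0 ≤ a) (haD : a < D) (hDE : D < E) :
    aoiPotential L a D < aoiPotential L a E := by
  have hDa : 0 < D - a := by linarith
  have hEa : 0 < E - a := by linarith
  have hD : 0 < D := by linarith
  have hE : 0 < E := by linarith
  have hlog : log (D - a) - log (E - a) ≤ -((E - D) / (E - a)) := by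
    rw [← log_div hDa.ne' hEa.ne']
    calc log ((D - a) / (E - a)) ≤ (D - a) / (E - a) - 1 := log_le_sub_one_of_pos (by positivity)
      _ = -((E - D) / (E - a)) := by field_simp; ring
  have hweight : L * a * (E - D) / (D * E) < (E - D) / (E - a) := by
    rw [div_lt_div_iff₀ (by positivity) hEa]
    have hLa : L * a * (E - a) < D * E := by
      nlinarith [mul_nonneg ha hEa.le, mul_le_mul_of_nonneg_right hL (mul_nonneg ha hEa.le)]
    nlinarith [mul_lt_mul_of_pos_left hLa (sub_pos.2 hDE)]
  have hsplit : L * a / D - L * a / E = L * a * (E - D) / (D * E) := by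
    field_simp
  unfold aoiPotential
  linarith

end

theorem aoiPotential_add_inv_eq {L K η a p : ℝ} (hη : 0 < η) (ha : 0 ≤ a) (hp : 0 < p)
    (hfix : p = exp (-L / (1 + a * η * p) - K)) :
    aoiPotential L a (a + 1 / (η * p)) = L + K - log η := by
  have hlog : log p = -L / (1 + a * η * p) - K := by rw [← log_exp (-L / _ - K), ← hfix]
  rw [aoiPotential, add_sub_cancel_left, one_div, log_inv, log_mul hη.ne' hp.ne', hlog]
  field_simp
  ring

theorem monotoneOn_of_aoiPotential_eq {L C : ℝ} {g : ℝ → ℝ} (hL : L ≤ 1)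
    (hg : ∀ a ∈ Ici (0 : ℝ), a < g a) (hC : ∀ a ∈ Ici (0 : ℝ), aoiPotential L a (g a) = C) :
    MonotoneOn g (Ici 0) := by
  intro a ha b hb hab
  by_contra! hlt
  have := calc
    C = aoiPotential L b (g b) := (hC b hb).symm
    _ < aoiPotential L b (g a) := aoiPotential_lt_of_lt hL hb (hg b hb) hlt
    _ ≤ aoiPotential L a (g a) := aoiPotential_le_of_le hL ha hab ((hg b hb).trans hlt)
    _ = C := hC a ha
  exact this.false

theorem stmt_15_general (lam c r η θ α ρ : ℝ)
    (hη : η ∈ Set.Ioc (0:ℝ) 1)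
    (P : ℝ → ℝ)
    (hPfix : ∀ a : ℝ, 0 ≤ a →
      P a = Real.exp (-(lam * c * r ^ 2 * η) / (1 + a * η * P a) - θ * r ^ α / ρ))
    (hcond : lam * c * r ^ 2 ≤ 1 / η) :
    MonotoneOn (fun a => a + 1 / (η * P a)) (Set.Ici (0:ℝ)) ∧
    (∀ a : ℝ, 0 ≤ a → (0:ℝ) + 1 / (η * P 0) ≤ a + 1 / (η * P a)) ∧
    (0:ℝ) + 1 / (η * P 0)
      = Real.exp (lam * c * r ^ 2 * η + θ * r ^ α / ρ) / η := by
  obtain ⟨hη0, -⟩ := hη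
  have hL : lam * c * r ^ 2 * η ≤ 1 := (le_div_iff₀ hη0).1 hcond
  have hP : ∀ a : ℝ, 0 ≤ a → 0 < P a := fun a ha => by rw [hPfix a ha]; positivity
  have hmono : MonotoneOn (fun a => a + 1 / (η * P a)) (Ici 0) :=
    monotoneOn_of_aoiPotential_eq hL
      (fun a ha => lt_add_of_pos_right a (by have := hP a ha; positivity))
      (fun a ha => aoiPotential_add_inv_eq hη0 ha (hP a ha) (hPfix a ha))
  refine ⟨hmono, fun a ha => hmono self_mem_Ici ha ha, ?_⟩
  rw [hPfix 0 le_rfl, zero_mul, zero_mul, add_zero, div_one, zero_add, ← neg_add', exp_neg]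
  field_simp

/-- if λcr² ≤ 1/η, the mean peak AoI Δ̂(A) = A + 1/(η·p(A)) is
nondecreasing in A on [0,∞); hence the optimal age threshold is A* = 0 and the
optimal mean peak AoI equals exp(λcr²η + θr^α/ρ)/η. -/
theorem stmt_15 (lam c r η θ α ρ : ℝ)
    (hlam : 0 < lam) (hc : 0 < c) (hr : 0 < r) (hη : η ∈ Set.Ioc (0:ℝ) 1)
    (hθ : 0 < θ) (hα : 0 < α) (hρ : 0 < ρ)
    (P : ℝ → ℝ)
    (hPmem : ∀ a : ℝ, 0 ≤ a → P a ∈ Set.Ioc (0:ℝ) 1)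
    (hPfix : ∀ a : ℝ, 0 ≤ a →
      P a = Real.exp (-(lam * c * r ^ 2 * η) / (1 + a * η * P a) - θ * r ^ α / ρ))
    (hstab : ∀ a : ℝ, 0 ≤ a →
      0 < (1 + a * η * P a) ^ 2 - lam * c * r ^ 2 * a * η ^ 2 * P a)
    (hcond : lam * c * r ^ 2 ≤ 1 / η) :
    MonotoneOn (fun a => a + 1 / (η * P a)) (Set.Ici (0:ℝ)) ∧
    (∀ a : ℝ, 0 ≤ a → (0:ℝ) + 1 / (η * P 0) ≤ a + 1 / (η * P a)) ∧
    (0:ℝ) + 1 / (η * P 0)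
      = Real.exp (lam * c * r ^ 2 * η + θ * r ^ α / ρ) / η :=
  stmt_15_general lam c r η θ α ρ hη P hPfix hcond
end

section
/- Let v = λcr²η > 0 and let u ≥ 1 be a solution of the cubic-type equation u³ - v·u² + (η·e^{-θr^α/ρ}·e^{-v/u} - 1)·u - v = 0. If v ≤ 1, then the function f(u) = u³ - vu² + (η e^{-θr^α/ρ} e^{-v/u} - 1)u - v is strictly increasing on [1, ∞), so this equation has at most one root u ≥ 1. -/
/-!
Write `f u = (u³ - v u² - u) + c · u e^{-v/u} - v` with `c = η e^{-θ r^α / ρ} ≥ 0`. The cubic part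
is strictly increasing on `[1, ∞)` as soon as `v ≤ 1`, and `u ↦ u e^{-v/u}` is a product of two
positive nondecreasing functions on `(0, ∞)`, so `f` is strictly increasing on `[1, ∞)`.
-/

open Real Set

lemma strictMonoOn_cubic_sub {v : ℝ} (hv : v ≤ 1) :
    StrictMonoOn (fun u : ℝ => u ^ 3 - v * u ^ 2 - u) (Ici 1) := by
  intro a (ha : 1 ≤ a) b (hb : 1 ≤ b) hab
  have hfactor : 0 < a ^ 2 + a * b + b ^ 2 - v * (a + b) - 1 := by
    nlinarith [mul_le_mul_of_nonneg_right hv (by linarith : (0:ℝ) ≤ a + b)]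
  have hdiff : (b ^ 3 - v * b ^ 2 - b) - (a ^ 3 - v * a ^ 2 - a)
      = (b - a) * (a ^ 2 + a * b + b ^ 2 - v * (a + b) - 1) := by ring
  show a ^ 3 - v * a ^ 2 - a < b ^ 3 - v * b ^ 2 - b
  linarith [mul_pos (sub_pos.2 hab) hfactor]

lemma monotoneOn_mul_exp_neg_div {v : ℝ} (hv : 0 ≤ v) :
    MonotoneOn (fun u : ℝ => u * exp (-(v / u))) (Ioi 0) := by
  intro a (ha : 0 < a) b (hb : 0 < b) hab
  have hexp : exp (-(v / a)) ≤ exp (-(v / b)) :=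
    exp_le_exp.2 (neg_le_neg (div_le_div_of_nonneg_left hv ha hab))
  exact mul_le_mul hab hexp (exp_pos _).le hb.le

lemma strictMonoOn_cubic_add_mul_exp {c v : ℝ} (hc : 0 ≤ c) (hv : 0 ≤ v) (hv1 : v ≤ 1) :
    StrictMonoOn (fun u : ℝ => u ^ 3 - v * u ^ 2 + (c * exp (-(v / u)) - 1) * u - v) (Ici 1) := by
  have hexp : MonotoneOn (fun u : ℝ => c * (u * exp (-(v / u)))) (Ici 1) := fun a ha b hb hab =>
    mul_le_mul_of_nonneg_left (monotoneOn_mul_exp_neg_div hv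
      (show (0:ℝ) < a from zero_lt_one.trans_le ha) (show (0:ℝ) < b from zero_lt_one.trans_le hb)
      hab) hc
  have hsum := (strictMonoOn_cubic_sub hv1).add_monotone hexp
  intro a ha b hb hab
  have := hsum ha hb hab
  simp only at this ⊢
  linarith

theorem stmt_16_general (η θ r α ρ v : ℝ)
    (hη : η ∈ Set.Ioc (0:ℝ) 1) (hv : 0 < v) (hv1 : v ≤ 1)
    (f : ℝ → ℝ)
    (hf : ∀ u, f u = u ^ 3 - v * u ^ 2
      + (η * Real.exp (-(θ * r ^ α / ρ)) * Real.exp (-(v / u)) - 1) * u - v) :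
    StrictMonoOn f (Set.Ici (1:ℝ)) ∧
    ∀ u₁ ∈ Set.Ici (1:ℝ), ∀ u₂ ∈ Set.Ici (1:ℝ),
      f u₁ = 0 → f u₂ = 0 → u₁ = u₂ := by
  have hc : 0 ≤ η * exp (-(θ * r ^ α / ρ)) := mul_nonneg hη.1.le (exp_pos _).le
  have hmono : StrictMonoOn f (Ici 1) := by
    rw [funext hf]
    exact strictMonoOn_cubic_add_mul_exp hc hv.le hv1
  exact ⟨hmono, fun u₁ h₁ u₂ h₂ hf₁ hf₂ => hmono.injOn h₁ h₂ (hf₁.trans hf₂.symm)⟩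

/-- for v = λcr²η ∈ (0,1], the function
f(u) = u³ - vu² + (η·e^{-θr^α/ρ}·e^{-v/u} - 1)u - v is strictly increasing on
[1,∞), hence the equation f(u) = 0 has at most one root u ≥ 1. -/
theorem stmt_16 (η θ r α ρ v : ℝ)
    (hη : η ∈ Set.Ioc (0:ℝ) 1) (hθ : 0 < θ) (hr : 0 < r) (hα : 0 < α)
    (hρ : 0 < ρ) (hv : 0 < v) (hv1 : v ≤ 1)
    (f : ℝ → ℝ)
    (hf : ∀ u, f u = u ^ 3 - v * u ^ 2
      + (η * Real.exp (-(θ * r ^ α / ρ)) * Real.exp (-(v / u)) - 1) * u - v) :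
    StrictMonoOn f (Set.Ici (1:ℝ)) ∧
    ∀ u₁ ∈ Set.Ici (1:ℝ), ∀ u₂ ∈ Set.Ici (1:ℝ),
      f u₁ = 0 → f u₂ = 0 → u₁ = u₂ :=
  stmt_16_general η θ r α ρ v hη hv hv1 f hf
end

section
/- Let Ω(b) = b³ + 18b + 3√3√(b⁴ + 11b² - 1) and x(b) = (Ω^{2/3} + bΩ^{1/3} + b² + 3)/(3Ω^{1/3}) for b ≥ 1. Then lim_{b→∞} x(b)/b = 1; consequently, in the asymptotic optimal configuration, the optimal age threshold A* satisfies A*/(λcr²) → e and the optimal time-average AoI satisfies Δ̄*/(λcr²) → e/2 as λcr² → ∞ (with η = 1, ignoring noise so θr^α/ρ terms vanish). -/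
/-!
Writing `u = Ω^{1/3}`, the root is `x = (u² + b u + b² + 3) / (3u)`. Since `Ω ~ b³` we get
`u ~ b`, hence `x ~ (b² + b² + b²) / (3b) = b`. Then `b / x → 1`, so `p_s = exp (-(b/x)) → e⁻¹`,
and `A* = (x - 1) / p_s` and `Δ̄* ≈ x / (2 p_s)` grow like `e b` and `e b / 2` respectively.
-/

open Filter Real Topology

noncomputable def cardanoOmega (b : ℝ) : ℝ :=
  b ^ 3 + 18 * b + 3 * √3 * √(b ^ 4 + 11 * b ^ 2 - 1)

noncomputable def cardanoRoot (b : ℝ) : ℝ :=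
  (cardanoOmega b ^ ((2:ℝ)/3) + b * cardanoOmega b ^ ((1:ℝ)/3) + b ^ 2 + 3) /
    (3 * cardanoOmega b ^ ((1:ℝ)/3))

lemma cardanoOmega_pos {b : ℝ} (hb : 0 < b) : 0 < cardanoOmega b := by
  unfold cardanoOmega
  positivity

lemma cardanoOmega_div_pow_three {b : ℝ} (hb : 0 < b) :
    cardanoOmega b / b ^ 3 =
      1 + 18 * b⁻¹ ^ 2 + 3 * √3 * √(b⁻¹ ^ 2 + 11 * b⁻¹ ^ 4 - b⁻¹ ^ 6) := by
  have hsqrt : √(b ^ 4 + 11 * b ^ 2 - 1) / b ^ 3 = √(b⁻¹ ^ 2 + 11 * b⁻¹ ^ 4 - b⁻¹ ^ 6) := by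
    rw [← sqrt_sq (by positivity : 0 ≤ b ^ 3), ← sqrt_div' _ (by positivity)]
    congr 1
    field_simp
  unfold cardanoOmega
  rw [← hsqrt]
  field_simp

lemma tendsto_cardanoOmega_div_pow_three :
    Tendsto (fun b => cardanoOmega b / b ^ 3) atTop (𝓝 1) := by
  let g : ℝ → ℝ := fun t => 1 + 18 * t ^ 2 + 3 * √3 * √(t ^ 2 + 11 * t ^ 4 - t ^ 6)
  have hg : Tendsto g (𝓝 0) (𝓝 1) := by
    have : Continuous g := by fun_prop
    simpa [g] using this.tendsto 0
  refine (hg.comp tendsto_inv_atTop_zero).congr' ?_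
  filter_upwards [eventually_gt_atTop 0] with b hb
  exact (cardanoOmega_div_pow_three hb).symm

lemma tendsto_rpow_one_third_div_self {f : ℝ → ℝ}
    (hf : Tendsto (fun b => f b / b ^ 3) atTop (𝓝 1)) (hf0 : ∀ᶠ b in atTop, 0 ≤ f b) :
    Tendsto (fun b => f b ^ ((1:ℝ)/3) / b) atTop (𝓝 1) := by
  have h := hf.rpow_const (p := (1:ℝ)/3) (Or.inl one_ne_zero)
  rw [one_rpow] at h
  refine h.congr' ?_
  filter_upwards [hf0, eventually_gt_atTop 0] with b hfb hb
  rw [div_rpow hfb (by positivity), one_div, ← Nat.cast_ofNat,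
    pow_rpow_inv_natCast hb.le three_ne_zero]

lemma tendsto_cardano_div_self {u : ℝ → ℝ} (hu : Tendsto (fun b => u b / b) atTop (𝓝 1)) :
    Tendsto (fun b => (u b ^ 2 + b * u b + b ^ 2 + 3) / (3 * u b) / b) atTop (𝓝 1) := by
  have hinv : Tendsto (fun b : ℝ => b⁻¹) atTop (𝓝 0) := tendsto_inv_atTop_zero
  have h : Tendsto (fun b => ((u b / b) ^ 2 + u b / b + 1 + 3 * b⁻¹ ^ 2) / (3 * (u b / b)))
      atTop (𝓝 ((1 ^ 2 + 1 + 1 + 3 * 0 ^ 2) / (3 * 1))) :=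
    ((((hu.pow 2).add hu).add_const 1).add ((hinv.pow 2).const_mul 3)).div
      (hu.const_mul 3) (by norm_num)
  rw [show ((1:ℝ) ^ 2 + 1 + 1 + 3 * 0 ^ 2) / (3 * 1) = 1 by norm_num] at h
  refine h.congr' ?_
  filter_upwards [hu.eventually (lt_mem_nhds one_pos), eventually_gt_atTop 0] with b hub hb
  have hu0 : 0 < u b := (div_pos_iff_of_pos_right hb).mp hub
  field_simp

lemma rpow_two_thirds_eq_sq {y : ℝ} (hy : 0 ≤ y) : y ^ ((2:ℝ)/3) = (y ^ ((1:ℝ)/3)) ^ 2 := by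
  rw [← rpow_natCast, ← rpow_mul hy]
  norm_num

theorem tendsto_cardanoRoot_div_self : Tendsto (fun b => cardanoRoot b / b) atTop (𝓝 1) := by
  have hΩ0 : ∀ᶠ b in atTop, 0 < cardanoOmega b :=
    (eventually_gt_atTop 0).mono fun _ => cardanoOmega_pos
  have hu := tendsto_rpow_one_third_div_self tendsto_cardanoOmega_div_pow_three
    (hΩ0.mono fun _ => le_of_lt)
  refine (tendsto_cardano_div_self hu).congr' ?_
  filter_upwards [hΩ0] with b hb
  rw [cardanoRoot, rpow_two_thirds_eq_sq hb.le]

section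

variable {x : ℝ → ℝ}

lemma tendsto_exp_neg_div_of_tendsto_div_self (hx : Tendsto (fun b => x b / b) atTop (𝓝 1)) :
    Tendsto (fun b => exp (-(b / x b))) atTop (𝓝 (exp (-1))) := by
  have h := (hx.inv₀ one_ne_zero).neg
  simp only [inv_div, inv_one] at h
  exact (continuous_exp.tendsto _).comp h

lemma tendsto_mul_self_atTop_of_tendsto_div_self
    (hx : Tendsto (fun b => x b / b) atTop (𝓝 1)) :
    Tendsto (fun b => x b * b) atTop atTop := by
  refine (hx.pos_mul_atTop one_pos (tendsto_pow_atTop two_ne_zero)).congr' ?_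
  filter_upwards [eventually_ne_atTop 0] with b hb
  field_simp

lemma tendsto_ageThreshold_div_self (hx : Tendsto (fun b => x b / b) atTop (𝓝 1)) :
    Tendsto (fun b => ((x b - 1) / exp (-(b / x b))) / b) atTop (𝓝 (exp 1)) := by
  have h := (hx.sub (tendsto_inv_atTop_zero (𝕜 := ℝ))).div
    (tendsto_exp_neg_div_of_tendsto_div_self hx) (exp_ne_zero _)
  rw [sub_zero, exp_neg, one_div, inv_inv] at h
  refine h.congr fun b => ?_
  simp only [Pi.div_apply]
  ring

lemma tendsto_averageAge_div_self (hx : Tendsto (fun b => x b / b) atTop (𝓝 1)) :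
    Tendsto (fun b =>
        (x b / (2 * exp (-(b / x b))) + 1 / (2 * exp (-(b / x b)) * x b) + 1 / 2) / b)
      atTop (𝓝 (exp 1 / 2)) := by
  have hps := tendsto_exp_neg_div_of_tendsto_div_self hx
  have hmain := hx.div (hps.const_mul 2) (by positivity)
  have hcross : Tendsto (fun b => (2 * exp (-(b / x b)) * (x b * b))⁻¹) atTop (𝓝 0) :=
    ((hps.const_mul 2).pos_mul_atTop (by positivity)
      (tendsto_mul_self_atTop_of_tendsto_div_self hx)).inv_tendsto_atTop
  have h := (hmain.add hcross).add ((tendsto_inv_atTop_zero (𝕜 := ℝ)).const_mul (1 / 2))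
  rw [add_zero, mul_zero, add_zero, exp_neg] at h
  convert h using 1
  · ext b
    simp only [Pi.div_apply]
    ring
  · field_simp

end

/-- scaling law, Corollary 5: with
Ω(b) = b³ + 18b + 3√3√(b⁴+11b²-1) and Cardano root
x(b) = (Ω^{2/3} + bΩ^{1/3} + b² + 3)/(3Ω^{1/3}) of x³ - bx² - x - b = 0, one has
x(b)/b → 1 as b → ∞; consequently, with p_s(b) = exp(-b/x(b)) (η = 1, no noise),
the optimal age threshold A*(b) = (x(b)-1)/p_s(b) satisfies A*(b)/b → e and the
optimal time-average AoI
Δ̄*(b) = x(b)/(2p_s(b)) + 1/(2p_s(b)x(b)) + 1/2 satisfies Δ̄*(b)/b → e/2. -/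
theorem stmt_18 :
    let Ω : ℝ → ℝ := fun b =>
      b ^ 3 + 18 * b + 3 * Real.sqrt 3 * Real.sqrt (b ^ 4 + 11 * b ^ 2 - 1)
    let x : ℝ → ℝ := fun b =>
      ((Ω b) ^ ((2:ℝ)/3) + b * (Ω b) ^ ((1:ℝ)/3) + b ^ 2 + 3) / (3 * (Ω b) ^ ((1:ℝ)/3))
    let ps : ℝ → ℝ := fun b => Real.exp (-(b / x b))
    Filter.Tendsto (fun b => x b / b) Filter.atTop (nhds 1) ∧
    Filter.Tendsto (fun b => ((x b - 1) / ps b) / b) Filter.atTop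
      (nhds (Real.exp 1)) ∧
    Filter.Tendsto
      (fun b => (x b / (2 * ps b) + 1 / (2 * ps b * x b) + 1 / 2) / b)
      Filter.atTop (nhds (Real.exp 1 / 2)) := by
  intro Ω x ps
  have hx : Tendsto (fun b => x b / b) atTop (𝓝 1) := tendsto_cardanoRoot_div_self
  exact ⟨hx, tendsto_ageThreshold_div_self hx, tendsto_averageAge_div_self hx⟩
end
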